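/- (Incorrect equilibria are collinear) Consider n = 3 agents in ℝ² with constraints E = {(1,2), (1,3)} and A = {(1,2,3)}, so that F_W(p) = (‖p_1 − p_2‖², ‖p_1 − p_3‖², cos θ¹_{23}(p)) for configurations p = (p_1, p_2, p_3) with p_2 ≠ p_1 and p_3 ≠ p_1. Let c ∈ ℝ³ be any constant target and e(p) = F_W(p) − c. If p satisfies R_W(p)ᵀ e(p) = 0 and e(p) ≠ 0 (i.e., p is an incorrect equilibrium of the gradient flow), then the three points p_1, p_2, p_3 are collinear. -/

import Mathlib

/-!
Pairing `R_W(p)ᵀ e = 0` with a variation `δ` says that `q ↦ ⟪e, F_W q⟫` is stationary at `p`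
along every line. Moving only `p 1` along `w`, with `u = p 1 - p 0` and `v = p 2 - p 0`, the
derivative is `⟪α • u + β • v, w⟫`, where `β` is a nonzero multiple of the angle error and `α` is
twice the error on `‖u‖²` once the angle error vanishes. If `u` and `v` were linearly
independent, `α = β = 0`; moving `p 2` likewise kills the error on `‖v‖²`, so `e = 0`.
-/

open scoped RealInnerProductSpace

noncomputable section

/-- A point in `ℝ^d`. -/
abbrev Pt (d : ℕ) : Type := EuclideanSpace ℝ (Fin d)

/-- A configuration of `n` points in `ℝ^d`, identified with `ℝ^{dn}` (Euclidean norm). -/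
abbrev Conf (d n : ℕ) : Type := PiLp 2 (fun _ : Fin n => Pt d)

/-- Cosine of the angle at vertex `k` subtended by vertices `i` and `j`. -/
def cosAngle {d n : ℕ} (p : Conf d n) (k i j : Fin n) : ℝ :=
  ⟪p i - p k, p j - p k⟫ / (‖p i - p k‖ * ‖p j - p k‖)

/-- The set `χ` of admissible configurations for the angle set `A`. -/
def Chi {d n : ℕ} (A : Finset (Fin n × Fin n × Fin n)) : Set (Conf d n) :=
  {p | ∀ a ∈ A, p a.2.1 ≠ p a.1 ∧ p a.2.2 ≠ p a.1}

/-- The weak rigidity function `F_W`. -/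
def FW {d n : ℕ} (E : Finset (Fin n × Fin n)) (A : Finset (Fin n × Fin n × Fin n))
    (p : Conf d n) : EuclideanSpace ℝ (↥E ⊕ ↥A) :=
  WithLp.toLp 2 (fun x => Sum.elim (fun e : ↥E => ‖p e.1.1 - p e.1.2‖ ^ 2)
    (fun a : ↥A => cosAngle p a.1.1 a.1.2.1 a.1.2.2) x)

/-- The weak rigidity matrix `R_W(p)`: Jacobian (Fréchet derivative) of `F_W` at `p`. -/
def RW {d n : ℕ} (E : Finset (Fin n × Fin n)) (A : Finset (Fin n × Fin n × Fin n))
    (p : Conf d n) : Conf d n →L[ℝ] EuclideanSpace ℝ (↥E ⊕ ↥A) :=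
  fderiv ℝ (FW E A) p

/-- Rank of the weak rigidity matrix. -/
def rankRW {d n : ℕ} (E : Finset (Fin n × Fin n)) (A : Finset (Fin n × Fin n × Fin n))
    (p : Conf d n) : ℕ :=
  Module.finrank ℝ ↥(LinearMap.range (RW E A p).toLinearMap)

/-- `J` is skew-symmetric. -/
def IsSkewAdj {d : ℕ} (J : Pt d →ₗ[ℝ] Pt d) : Prop :=
  ∀ x y : Pt d, ⟪J x, y⟫ = - ⟪x, J y⟫

/-- Trivial infinitesimal motions (translations and rotations). -/
def trivialMotions {d n : ℕ} (p : Conf d n) : Set (Conf d n) :=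
  {δ | ∃ (v : Pt d) (J : Pt d →ₗ[ℝ] Pt d), IsSkewAdj J ∧ ∀ i, δ i = v + J (p i)}

/-- Trivial infinitesimal motions including scaling. -/
def trivialMotionsScale {d n : ℕ} (p : Conf d n) : Set (Conf d n) :=
  {δ | ∃ (v : Pt d) (J : Pt d →ₗ[ℝ] Pt d) (c : ℝ),
    IsSkewAdj J ∧ ∀ i, δ i = v + J (p i) + c • p i}

/-- Congruence of two configurations. -/
def ConfCongruent {d n : ℕ} (p q : Conf d n) : Prop :=
  ∀ i j, ‖q i - q j‖ = ‖p i - p j‖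

/-- Proportional congruence of two configurations. -/
def PropCongruent {d n : ℕ} (p q : Conf d n) : Prop :=
  ∃ C : ℝ, 0 < C ∧ ∀ i j, ‖q i - q j‖ = C * ‖p i - p j‖

/-- Generalized weak rigidity (case `E ≠ ∅`). -/
def IsGWR {d n : ℕ} (E : Finset (Fin n × Fin n)) (A : Finset (Fin n × Fin n × Fin n))
    (p : Conf d n) : Prop :=
  ∃ U ∈ nhds p, U ⊆ Chi A ∧ ∀ q ∈ U, FW E A q = FW E A p → ConfCongruent p q

/-- Generalized weak rigidity (case `E = ∅`, up to scaling). -/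
def IsGWRScale {d n : ℕ} (E : Finset (Fin n × Fin n)) (A : Finset (Fin n × Fin n × Fin n))
    (p : Conf d n) : Prop :=
  ∃ U ∈ nhds p, U ⊆ Chi A ∧ ∀ q ∈ U, FW E A q = FW E A p → PropCongruent p q

/-- `p` is a regular point of `F_W`: its rank attains the maximum over `χ`. -/
def IsRegularPt {d n : ℕ} (E : Finset (Fin n × Fin n)) (A : Finset (Fin n × Fin n × Fin n))
    (p : Conf d n) : Prop :=
  p ∈ Chi A ∧ ∀ q ∈ (Chi A : Set (Conf d n)), rankRW E A q ≤ rankRW E A p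

/-- The gradient-flow vector field `u(p) = -R_W(p)ᵀ (F_W(p) - c)`. -/
def gradFlowVF {d n : ℕ} (E : Finset (Fin n × Fin n)) (A : Finset (Fin n × Fin n × Fin n))
    (c : EuclideanSpace ℝ (↥E ⊕ ↥A)) (p : Conf d n) : Conf d n :=
  -(ContinuousLinearMap.adjoint (RW E A p)) (FW E A p - c)

set_option synthInstance.maxHeartbeats 4000000 in
set_option maxHeartbeats 4000000 in
/-- `p : [0,∞) → χ` is a solution of the gradient flow `ṗ = -R_W(p)ᵀ e(p)`. -/
def IsGradFlowSol {d n : ℕ} (E : Finset (Fin n × Fin n)) (A : Finset (Fin n × Fin n × Fin n))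
    (c : EuclideanSpace ℝ (↥E ⊕ ↥A)) (p : ℝ → Conf d n) : Prop :=
  (∀ t : ℝ, 0 ≤ t → p t ∈ Chi A) ∧
  ∀ t : ℝ, 0 ≤ t → HasDerivAt p (gradFlowVF E A c (p t)) t

/-- Centroid of a configuration. -/
def centroid {d n : ℕ} (x : Conf d n) : Pt d := (n : ℝ)⁻¹ • ∑ i, x i

end
/-- The edge set `E = {(1,2), (1,3)}` (agents `1,2,3` indexed by `0,1,2`). -/
def E₃ : Finset (Fin 3 × Fin 3) := {(0, 1), (0, 2)}

/-- The angle set `A = {(1,2,3)}`: the angle at agent `1` subtended by agents `2, 3`. -/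
def A₃ : Finset (Fin 3 × Fin 3 × Fin 3) := {(0, 1, 2)}

section InnerProductSpace

variable {V : Type*} [NormedAddCommGroup V] [InnerProductSpace ℝ V]

theorem HasDerivAt.norm_of_ne_zero {f : ℝ → V} {f' : V} {t : ℝ} (hf : HasDerivAt f f' t)
    (h0 : f t ≠ 0) : HasDerivAt (fun s => ‖f s‖) (⟪f t, f'⟫ / ‖f t‖) t := by
  have h := hf.norm_sq.sqrt (pow_ne_zero 2 (norm_ne_zero_iff.2 h0))
  simp only [Real.sqrt_sq (norm_nonneg _)] at h
  rwa [mul_div_mul_left _ _ two_ne_zero] at h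

theorem HasDerivAt.inner_div_norm_mul_norm {f : ℝ → V} {f' : V} {t : ℝ} (hf : HasDerivAt f f' t)
    (h0 : f t ≠ 0) {y : V} (hy : y ≠ 0) :
    HasDerivAt (fun s => ⟪f s, y⟫ / (‖f s‖ * ‖y‖))
      (⟪f', y⟫ / (‖f t‖ * ‖y‖) - ⟪f t, y⟫ * ⟪f t, f'⟫ / (‖f t‖ ^ 3 * ‖y‖)) t := by
  have hx : ‖f t‖ ≠ 0 := norm_ne_zero_iff.2 h0
  have hy' : ‖y‖ ≠ 0 := norm_ne_zero_iff.2 hy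
  have h := (hf.inner ℝ (hasDerivAt_const t y)).div ((hf.norm_of_ne_zero h0).mul_const ‖y‖)
    (mul_ne_zero hx hy')
  refine h.congr_deriv ?_
  rw [inner_zero_right, zero_add]
  field_simp

/-- The left-hand side of `h` is the derivative of `x ↦ a * ‖x‖ ^ 2 + c * ⟪x, y⟫ / (‖x‖ * ‖y‖)`
along `w` (see `HasDerivAt.inner_div_norm_mul_norm`). -/
theorem eq_zero_of_critical_normSq_add_cos {x y : V}
    (hxy : LinearIndependent ℝ ![x, y]) {a c : ℝ}
    (h : ∀ w, 2 * a * ⟪x, w⟫ + c * (⟪w, y⟫ / (‖x‖ * ‖y‖) - ⟪x, y⟫ * ⟪x, w⟫ / (‖x‖ ^ 3 * ‖y‖))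
      = 0) : a = 0 ∧ c = 0 := by
  have hx : ‖x‖ ≠ 0 := norm_ne_zero_iff.2 (hxy.ne_zero 0)
  have hy : ‖y‖ ≠ 0 := norm_ne_zero_iff.2 (hxy.ne_zero 1)
  set α := 2 * a - c * ⟪x, y⟫ / (‖x‖ ^ 3 * ‖y‖)
  set β := c / (‖x‖ * ‖y‖)
  have hinner : ∀ w, ⟪α • x + β • y, w⟫ = 0 := fun w => by
    rw [← h w, inner_add_left, real_inner_smul_left, real_inner_smul_left, real_inner_comm w y]
    simp only [α, β]
    ring
  obtain ⟨hα, hβ⟩ := LinearIndependent.pair_iff.1 hxy α β (inner_self_eq_zero.1 (hinner _))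
  have hc : c = 0 := by simpa [β, hx, hy] using hβ
  refine ⟨?_, hc⟩
  simpa [α, hc] using hα

end InnerProductSpace

section WeakRigidity

variable {d n : ℕ} {E : Finset (Fin n × Fin n)} {A : Finset (Fin n × Fin n × Fin n)}
  {p : Conf d n}

theorem differentiableAt_FW (hp : p ∈ Chi A) : DifferentiableAt ℝ (FW E A) p := by
  rw [differentiableAt_piLp]
  rintro (e | ⟨a, ha⟩)
  · have hd : DifferentiableAt ℝ (fun q : Conf d n => q e.1.1 - q e.1.2) p := by fun_prop
    exact hd.norm_sq ℝ
  · obtain ⟨hi, hj⟩ := hp a ha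
    have hdi : DifferentiableAt ℝ (fun q : Conf d n => q a.2.1 - q a.1) p := by fun_prop
    have hdj : DifferentiableAt ℝ (fun q : Conf d n => q a.2.2 - q a.1) p := by fun_prop
    have hni := norm_ne_zero_iff.2 (sub_ne_zero.2 hi)
    have hnj := norm_ne_zero_iff.2 (sub_ne_zero.2 hj)
    show DifferentiableAt ℝ (fun q : Conf d n => cosAngle q a.1 a.2.1 a.2.2) p
    simp only [cosAngle, div_eq_mul_inv]
    exact (hdi.inner ℝ hdj).fun_mul
      (((hdi.norm ℝ (sub_ne_zero.2 hi)).fun_mul (hdj.norm ℝ (sub_ne_zero.2 hj))).fun_inv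
        (mul_ne_zero hni hnj))

theorem hasDerivAt_inner_FW_line (hp : p ∈ Chi A) (e : EuclideanSpace ℝ (↥E ⊕ ↥A))
    (δ : Conf d n) :
    HasDerivAt (fun t : ℝ => ⟪e, FW E A (p + t • δ)⟫) ⟪e, RW E A p δ⟫ 0 := by
  have hline := ((hasDerivAt_id' (0 : ℝ)).smul_const δ).const_add p
  have hFW : HasFDerivAt (FW E A) (RW E A p) (p + (0 : ℝ) • δ) := by
    rw [zero_smul, add_zero]
    exact (differentiableAt_FW hp).hasFDerivAt
  have hcomp := hFW.comp_hasDerivAt (0 : ℝ) hline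
  simpa using (hasDerivAt_const (0 : ℝ) e).inner ℝ hcomp

theorem hasDerivAt_inner_FW_line_eq_zero (hp : p ∈ Chi A) {e : EuclideanSpace ℝ (↥E ⊕ ↥A)}
    (he : (RW E A p).adjoint e = 0) (δ : Conf d n) :
    HasDerivAt (fun t : ℝ => ⟪e, FW E A (p + t • δ)⟫) 0 0 := by
  simpa [← ContinuousLinearMap.adjoint_inner_left, he] using hasDerivAt_inner_FW_line hp e δ

end WeakRigidity

theorem linearIndependent_vsub_of_not_collinear {k V P : Type*} [Field k] [AddCommGroup V]
    [Module k V] [AddTorsor V P] {p₁ p₂ p₃ : P} (h : ¬Collinear k {p₁, p₂, p₃}) :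
    LinearIndependent k ![p₂ -ᵥ p₁, p₃ -ᵥ p₁] := by
  have hi := (affineIndependent_iff_linearIndependent_vsub k _ 0).1
    (affineIndependent_iff_not_collinear_set.2 h)
  rw [← linearIndependent_equiv (finSuccAboveEquiv (0 : Fin 3))] at hi
  convert! hi using 1
  ext i
  fin_cases i <;> rfl

def edge₀₁ : ↥E₃ := ⟨(0, 1), by decide⟩

def edge₀₂ : ↥E₃ := ⟨(0, 2), by decide⟩

def angle₀₁₂ : ↥A₃ := ⟨(0, 1, 2), by decide⟩

theorem inner_FW₃ {d : ℕ} (e : EuclideanSpace ℝ (↥E₃ ⊕ ↥A₃)) (q : Conf d 3) :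
    ⟪e, FW E₃ A₃ q⟫ = e (.inl edge₀₁) * ‖q 0 - q 1‖ ^ 2 + e (.inl edge₀₂) * ‖q 0 - q 2‖ ^ 2
      + e (.inr angle₀₁₂) * cosAngle q 0 1 2 := by
  have hE : (Finset.univ : Finset ↥E₃) = {edge₀₁, edge₀₂} := by decide
  have hA : (Finset.univ : Finset ↥A₃) = {angle₀₁₂} := by decide
  rw [PiLp.inner_apply, Fintype.sum_sum_type, hE, hA, Finset.sum_pair (by decide),
    Finset.sum_singleton]
  simp [FW, edge₀₁, edge₀₂, angle₀₁₂, mul_comm]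

theorem eq_zero_of_edge_angle_coords_eq_zero {e : EuclideanSpace ℝ (↥E₃ ⊕ ↥A₃)}
    (h₀₁ : e (.inl edge₀₁) = 0) (h₀₂ : e (.inl edge₀₂) = 0) (h₀₁₂ : e (.inr angle₀₁₂) = 0) :
    e = 0 := by
  ext (⟨x, hx⟩ | ⟨x, hx⟩)
  · simp only [E₃, Finset.mem_insert, Finset.mem_singleton] at hx
    rcases hx with rfl | rfl
    exacts [h₀₁, h₀₂]
  · simp only [A₃, Finset.mem_singleton] at hx
    subst hx
    exact h₀₁₂

section VertexVariations

variable {d : ℕ} {p : Conf d 3}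

theorem hasDerivAt_inner_FW₃_line₁ (h₁ : p 1 ≠ p 0) (h₂ : p 2 ≠ p 0)
    (e : EuclideanSpace ℝ (↥E₃ ⊕ ↥A₃)) (w : Pt d) :
    HasDerivAt (fun t : ℝ => ⟪e, FW E₃ A₃ (p + t • WithLp.toLp 2 (Pi.single 1 w))⟫)
      (2 * e (.inl edge₀₁) * ⟪p 1 - p 0, w⟫ + e (.inr angle₀₁₂) *
        (⟪w, p 2 - p 0⟫ / (‖p 1 - p 0‖ * ‖p 2 - p 0‖)
          - ⟪p 1 - p 0, p 2 - p 0⟫ * ⟪p 1 - p 0, w⟫ / (‖p 1 - p 0‖ ^ 3 * ‖p 2 - p 0‖))) 0 := by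
  have hf : HasDerivAt (fun t : ℝ => p 1 + t • w - p 0) w 0 := by
    simpa using (((hasDerivAt_id (0 : ℝ)).smul_const w).const_add (p 1)).sub_const (p 0)
  have h0 : p 1 + (0 : ℝ) • w - p 0 ≠ 0 := by simpa [sub_eq_zero] using h₁
  have h := ((hf.norm_sq.const_mul (e (.inl edge₀₁))).add_const
    (e (.inl edge₀₂) * ‖p 2 - p 0‖ ^ 2)).add
    ((hf.inner_div_norm_mul_norm h0 (sub_ne_zero.2 h₂)).const_mul (e (.inr angle₀₁₂)))
  simp only [zero_smul, add_zero] at h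
  refine (h.congr_deriv (by ring)).congr_of_eventuallyEq (.of_forall fun t => ?_)
  simp [inner_FW₃, cosAngle, norm_sub_rev (p 0)]

theorem hasDerivAt_inner_FW₃_line₂ (h₁ : p 1 ≠ p 0) (h₂ : p 2 ≠ p 0)
    (e : EuclideanSpace ℝ (↥E₃ ⊕ ↥A₃)) (w : Pt d) :
    HasDerivAt (fun t : ℝ => ⟪e, FW E₃ A₃ (p + t • WithLp.toLp 2 (Pi.single 2 w))⟫)
      (2 * e (.inl edge₀₂) * ⟪p 2 - p 0, w⟫ + e (.inr angle₀₁₂) *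
        (⟪w, p 1 - p 0⟫ / (‖p 2 - p 0‖ * ‖p 1 - p 0‖)
          - ⟪p 2 - p 0, p 1 - p 0⟫ * ⟪p 2 - p 0, w⟫ / (‖p 2 - p 0‖ ^ 3 * ‖p 1 - p 0‖))) 0 := by
  have hf : HasDerivAt (fun t : ℝ => p 2 + t • w - p 0) w 0 := by
    simpa using (((hasDerivAt_id (0 : ℝ)).smul_const w).const_add (p 2)).sub_const (p 0)
  have h0 : p 2 + (0 : ℝ) • w - p 0 ≠ 0 := by simpa [sub_eq_zero] using h₂
  have h := ((hf.norm_sq.const_mul (e (.inl edge₀₂))).const_add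
    (e (.inl edge₀₁) * ‖p 1 - p 0‖ ^ 2)).add
    ((hf.inner_div_norm_mul_norm h0 (sub_ne_zero.2 h₁)).const_mul (e (.inr angle₀₁₂)))
  simp only [zero_smul, add_zero] at h
  refine (h.congr_deriv (by ring)).congr_of_eventuallyEq (.of_forall fun t => ?_)
  simp [inner_FW₃, cosAngle, norm_sub_rev (p 0), real_inner_comm (p 1 - p 0), mul_comm]

end VertexVariations

/-- for the 3-agent formation in `ℝ²` with constraints `E₃`, `A₃`, every
incorrect equilibrium of the gradient flow (`R_W(p)ᵀ e(p) = 0`, `e(p) ≠ 0`) is collinear. -/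
theorem stmt17 (c : EuclideanSpace ℝ (↥E₃ ⊕ ↥A₃)) (p : Conf 2 3)
    (hp : p ∈ Chi A₃)
    (heq : (ContinuousLinearMap.adjoint (RW E₃ A₃ p)) (FW E₃ A₃ p - c) = 0)
    (hne : FW E₃ A₃ p - c ≠ 0) :
    Collinear ℝ ({p 0, p 1, p 2} : Set (Pt 2)) := by
  obtain ⟨h₁, h₂⟩ : p 1 ≠ p 0 ∧ p 2 ≠ p 0 := hp (0, 1, 2) (by simp [A₃])
  have hcrit := hasDerivAt_inner_FW_line_eq_zero hp heq
  by_contra hcol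
  have hind : LinearIndependent ℝ ![p 1 - p 0, p 2 - p 0] := by
    simpa only [vsub_eq_sub] using linearIndependent_vsub_of_not_collinear hcol
  obtain ⟨he₀₁, he₀₁₂⟩ := eq_zero_of_critical_normSq_add_cos hind fun w =>
    ((hcrit _).unique (hasDerivAt_inner_FW₃_line₁ h₁ h₂ _ w)).symm
  obtain ⟨he₀₂, -⟩ := eq_zero_of_critical_normSq_add_cos
    (LinearIndependent.pair_symm_iff.1 hind) fun w =>
    ((hcrit _).unique (hasDerivAt_inner_FW₃_line₂ h₁ h₂ _ w)).symm
  exact hne (eq_zero_of_edge_angle_coords_eq_zero he₀₁ he₀₂ he₀₁₂)
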